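/- arXiv:1412.7845 — 3 statements merged into one kernel-verified Lean document; each statement's English description precedes it below -/
import Mathlib

section
/- Let x_n be a sequence of independent G-valued random variables such that x̂_n = x_1 x_2 ⋯ x_n converges almost surely in G. Then for every neighborhood V of e, ∑_{n=1}^∞ P(x_n ∈ V^c) < ∞. -/
/-!
Since `x̂ₙ₊₁ = x̂ₙ xₙ`, almost sure convergence of the products forces `xₙ = x̂ₙ⁻¹ x̂ₙ₊₁ → e`
almost surely, so almost every `ω` lies in only finitely many of the independent events
`{xₙ ∉ U}`, `U` the interior of `V`. By the second Borel–Cantelli lemma their probabilities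
are summable.
-/

open MeasureTheory ProbabilityTheory Filter Topology

/-- Ordered product `x 0 * x 1 * ⋯ * x (n-1)` in a (possibly noncommutative) monoid. -/
def partialProd {G : Type*} [Monoid G] (x : ℕ → G) (n : ℕ) : G :=
  ((List.range n).map x).prod

lemma partialProd_succ {G : Type*} [Monoid G] (x : ℕ → G) (n : ℕ) :
    partialProd x (n + 1) = partialProd x n * x n := by
  simp [partialProd, List.range_succ]

lemma tendsto_one_of_tendsto_partialProd {G : Type*} [Group G] [TopologicalSpace G]
    [IsTopologicalGroup G] {x : ℕ → G} {l : G} (h : Tendsto (partialProd x) atTop (𝓝 l)) :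
    Tendsto x atTop (𝓝 1) := by
  have hquot : Tendsto (fun n => (partialProd x n)⁻¹ * partialProd x (n + 1)) atTop
      (𝓝 (l⁻¹ * l)) := h.inv.mul (h.comp (tendsto_add_atTop_nat 1))
  simpa [partialProd_succ] using hquot

namespace ProbabilityTheory

variable {Ω ι β : Type*} {_mΩ : MeasurableSpace Ω} {μ : Measure Ω}

lemma iIndepFun.iIndepSet_preimage [MeasurableSpace β] {f : ι → Ω → β} (h : iIndepFun f μ)
    {A : ι → Set β} (hA : ∀ i, MeasurableSet (A i)) :
    iIndepSet (fun i => f i ⁻¹' A i) μ := by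
  rw [iIndepSet_iff_iIndep]
  refine iIndep_of_iIndep_of_le ((iIndepFun_iff_iIndep _ f μ).1 h) fun i => ?_
  refine MeasurableSpace.generateFrom_le fun t ht => ?_
  rw [Set.mem_singleton_iff.1 ht]
  exact ⟨A i, hA i, rfl⟩

lemma iIndepSet.tsum_measure_ne_top_of_ae_eventually_notMem {s : ℕ → Set Ω}
    (hsm : ∀ n, MeasurableSet (s n)) (hs : iIndepSet s μ)
    (h : ∀ᵐ ω ∂μ, ∀ᶠ n in atTop, ω ∉ s n) :
    ∑' n, μ (s n) ≠ ⊤ := by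
  intro htop
  have hlimsup : μ (limsup s atTop) = 0 := by
    rw [measure_eq_zero_iff_ae_notMem]
    filter_upwards [h] with ω hω
    simpa [mem_limsup_iff_frequently_mem, not_frequently] using hω
  simpa [hlimsup] using measure_limsup_eq_one hsm hs htop

end ProbabilityTheory

theorem summable_tail_of_ae_convergence_general
    {G : Type*} [Group G] [TopologicalSpace G] [IsTopologicalGroup G]
    [MeasurableSpace G] [BorelSpace G]
    {Ω : Type*} [MeasurableSpace Ω] {P : Measure Ω}
    {x : ℕ → Ω → G} (hmeas : ∀ n, Measurable (x n))
    (hindep : iIndepFun x P)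
    (hconv : ∀ᵐ ω ∂P, ∃ l : G,
      Tendsto (fun n => partialProd (fun i => x i ω) n) atTop (𝓝 l)) :
    ∀ V ∈ 𝓝 (1 : G), (∑' n, P {ω | x n ω ∈ Vᶜ}) < ⊤ := by
  intro V hV
  have hUc : MeasurableSet (interior V)ᶜ := isOpen_interior.isClosed_compl.measurableSet
  have heventually : ∀ᵐ ω ∂P, ∀ᶠ n in atTop, ω ∉ x n ⁻¹' (interior V)ᶜ := by
    filter_upwards [hconv] with ω ⟨l, hl⟩
    simpa using tendsto_one_of_tendsto_partialProd hl (interior_mem_nhds.2 hV)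
  have hfinite : ∑' n, P (x n ⁻¹' (interior V)ᶜ) ≠ ⊤ :=
    (hindep.iIndepSet_preimage fun _ => hUc).tsum_measure_ne_top_of_ae_eventually_notMem
      (fun n => hmeas n hUc) heventually
  refine lt_of_le_of_lt (ENNReal.tsum_le_tsum fun n => measure_mono ?_) hfinite.lt_top
  exact fun ω hω => Set.compl_subset_compl.2 interior_subset hω

/-- If the products `x_1 ⋯ x_n` of independent `G`-valued random variables converge a.s.,
then for every neighborhood `V` of the identity, `∑ P(x_n ∈ Vᶜ) < ∞`. -/
theorem summable_tail_of_ae_convergence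
    {G : Type*} [Group G] [TopologicalSpace G] [IsTopologicalGroup G]
    [MeasurableSpace G] [BorelSpace G]
    {Ω : Type*} [MeasurableSpace Ω] {P : Measure Ω} [IsProbabilityMeasure P]
    {x : ℕ → Ω → G} (hmeas : ∀ n, Measurable (x n))
    (hindep : iIndepFun x P)
    (hconv : ∀ᵐ ω ∂P, ∃ l : G,
      Tendsto (fun n => partialProd (fun i => x i ω) n) atTop (𝓝 l)) :
    ∀ V ∈ 𝓝 (1 : G), (∑' n, P {ω | x n ω ∈ Vᶜ}) < ⊤ :=
  summable_tail_of_ae_convergence_general hmeas hindep hconv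
end

section
/- For each k, let Q^k : [0,∞) → [0,∞) be a nondecreasing function with Q^k(0) = 0, Q^k(t) = Q^k(1) for t ≥ 1, and Q^k(1) ≤ C for a constant C independent of k, satisfying Q^k(t) − Q^k(s) ≤ 2ε(t − s) + ε_k for all 0 ≤ s < t ≤ 1, where ε > 0 is fixed and ε_k → 0 as k → ∞. Let A^k : [0,∞) → Sym_d(ℝ) be functions with values in symmetric d×d matrices such that A^k(0) = 0, A^k(t) − A^k(s) is positive semidefinite for s < t, A^k(t) = A^k(1) for t ≥ 1, and |A^k_{ij}(t) − A^k_{ij}(s)| ≤ Q^k(t) − Q^k(s) for all i, j and s < t. Then there exist a subsequence of k → ∞ and a covariance matrix function A (i.e., A is continuous, A(0) = 0, and A(t) − A(s) is positive semidefinite for s < t) with A(t) = A(1) for t ≥ 1 such that A^k(t) → A(t) for every t ≥ 0 along the subsequence. -/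
open Filter Topology

/-!
A diagonal argument gives a subsequence along which `A^k` converges at every point of a countable
dense subset of `[0, 1]`. The bound `|A^k_ij(t) - A^k_ij(s)| ≤ 2ε|t - s| + |ε_k|` makes the
sequence asymptotically uniformly equicontinuous: the defect `ε_k` dies out, so convergence
spreads from the dense set to all of `[0, 1]` and the limit is uniformly continuous. Extending
the limit constantly beyond `1` gives `A`; symmetry and positive semidefiniteness of increments
are closed conditions and pass to the limit.
-/

section AsymptoticEquicontinuity

variable {X E : Type*} [PseudoMetricSpace X] [PseudoMetricSpace E]

def AsymptoticallyUniformlyEquicontinuous (f : ℕ → X → E) : Prop :=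
  ∀ η > 0, ∃ δ > 0, ∀ᶠ k in atTop, ∀ x y, dist x y < δ → dist (f k x) (f k y) < η

namespace AsymptoticallyUniformlyEquicontinuous

variable {f : ℕ → X → E}

theorem of_dist_le {L : ℝ} (hL : 0 ≤ L) {e : ℕ → ℝ} (he : Tendsto e atTop (𝓝 0))
    (hfe : ∀ k x y, dist (f k x) (f k y) ≤ L * dist x y + e k) :
    AsymptoticallyUniformlyEquicontinuous f := by
  intro η hη
  refine ⟨η / (2 * (L + 1)), by positivity, ?_⟩
  filter_upwards [he.eventually (gt_mem_nhds (half_pos hη))] with k hk x y hxy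
  have hLδ : L * dist x y ≤ η / 2 :=
    calc L * dist x y ≤ (L + 1) * (η / (2 * (L + 1))) := by gcongr; linarith
      _ = η / 2 := by field_simp
  linarith [hfe k x y]

theorem comp_strictMono (hf : AsymptoticallyUniformlyEquicontinuous f) {φ : ℕ → ℕ}
    (hφ : StrictMono φ) : AsymptoticallyUniformlyEquicontinuous fun k => f (φ k) := by
  intro η hη
  obtain ⟨δ, hδ, hev⟩ := hf η hη
  exact ⟨δ, hδ, hφ.tendsto_atTop.eventually hev⟩

theorem cauchySeq_of_dense (hf : AsymptoticallyUniformlyEquicontinuous f) {D : Set X}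
    (hD : Dense D) (hfD : ∀ q ∈ D, CauchySeq (f · q)) (x : X) : CauchySeq (f · x) := by
  rw [Metric.cauchySeq_iff]
  intro η hη
  obtain ⟨δ, hδ, hev⟩ := hf (η / 3) (by positivity)
  obtain ⟨q, hxq, hqD⟩ := Metric.dense_iff.mp hD x δ hδ
  rw [Metric.mem_ball, dist_comm] at hxq
  obtain ⟨N₁, hN₁⟩ := eventually_atTop.mp hev
  obtain ⟨N₂, hN₂⟩ := Metric.cauchySeq_iff.mp (hfD q hqD) (η / 3) (by positivity)
  refine ⟨max N₁ N₂, fun m hm n hn => ?_⟩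
  calc dist (f m x) (f n x)
      ≤ dist (f m x) (f m q) + dist (f m q) (f n q) + dist (f n q) (f n x) :=
        dist_triangle4 _ _ _ _
    _ < η / 3 + η / 3 + η / 3 := by
      gcongr
      · exact hN₁ m (le_of_max_le_left hm) x q hxq
      · exact hN₂ m (le_of_max_le_right hm) n (le_of_max_le_right hn)
      · exact hN₁ n (le_of_max_le_left hn) q x (by rwa [dist_comm])
    _ = η := by ring

theorem uniformContinuous_of_tendsto (hf : AsymptoticallyUniformlyEquicontinuous f)
    {g : X → E} (hg : ∀ x, Tendsto (f · x) atTop (𝓝 (g x))) : UniformContinuous g := by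
  refine Metric.uniformContinuous_iff.mpr fun η hη => ?_
  obtain ⟨δ, hδ, hev⟩ := hf (η / 2) (half_pos hη)
  refine ⟨δ, hδ, fun {x y} hxy => ?_⟩
  have hle : dist (g x) (g y) ≤ η / 2 :=
    le_of_tendsto ((hg x).dist (hg y)) (hev.mono fun k hk => (hk x y hxy).le)
  linarith

end AsymptoticallyUniformlyEquicontinuous

theorem IsCompact.exists_strictMono_forall_tendsto {ι : Type*} [Countable ι] {K : Set E}
    (hK : IsCompact K) {f : ℕ → ι → E} (hfK : ∀ k i, f k i ∈ K) :
    ∃ φ : ℕ → ℕ, StrictMono φ ∧ ∃ g : ι → E,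
      ∀ i, Tendsto (fun k => f (φ k) i) atTop (𝓝 (g i)) := by
  obtain ⟨g, -, φ, hφ, hg⟩ := (isCompact_univ_pi fun _ => hK).tendsto_subseq
    (x := f) fun k => Set.mem_univ_pi.mpr (hfK k)
  exact ⟨φ, hφ, g, tendsto_pi_nhds.mp hg⟩

theorem AsymptoticallyUniformlyEquicontinuous.exists_strictMono_forall_tendsto
    [TopologicalSpace.SeparableSpace X] {f : ℕ → X → E}
    (hf : AsymptoticallyUniformlyEquicontinuous f) {K : Set E} (hK : IsCompact K)
    (hfK : ∀ k x, f k x ∈ K) :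
    ∃ φ : ℕ → ℕ, StrictMono φ ∧ ∃ g : X → E, UniformContinuous g ∧
      ∀ x, Tendsto (fun k => f (φ k) x) atTop (𝓝 (g x)) := by
  obtain ⟨D, hDc, hD⟩ := TopologicalSpace.exists_countable_dense X
  have : Countable D := hDc.to_subtype
  obtain ⟨φ, hφ, _, hφD⟩ := hK.exists_strictMono_forall_tendsto
    (f := fun k (q : D) => f k q) fun k q => hfK k q
  have hfφ := hf.comp_strictMono hφ
  have hcauchy := hfφ.cauchySeq_of_dense hD fun q hq => (hφD ⟨q, hq⟩).cauchySeq
  choose g hg using fun x => (cauchySeq_tendsto_of_isComplete hK.isComplete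
    (fun k => hfK (φ k) x) (hcauchy x)).imp fun _ => And.right
  exact ⟨φ, hφ, g, hfφ.uniformContinuous_of_tendsto hg, hg⟩

end AsymptoticEquicontinuity

theorem dist_le_mul_dist_add_abs_of_forall_lt {E : Type*} [PseudoMetricSpace E] {S : Set ℝ}
    {u : S → E} {L e : ℝ} (hL : 0 ≤ L)
    (hu : ∀ s t : S, s < t → dist (u s) (u t) ≤ L * (t - s) + e) (s t : S) :
    dist (u s) (u t) ≤ L * dist s t + |e| := by
  wlog hst : s ≤ t generalizing s t
  · rw [dist_comm, dist_comm s]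
    exact this t s (le_of_not_ge hst)
  rcases hst.eq_or_lt with rfl | hst
  · simp only [dist_self]
    positivity
  have hst' : (s : ℝ) < t := hst
  calc dist (u s) (u t) ≤ L * (t - s) + e := hu s t hst
    _ ≤ L * dist s t + |e| := by
      rw [Subtype.dist_eq, Real.dist_eq, abs_sub_comm, abs_of_pos (sub_pos.2 hst')]
      linarith [le_abs_self e]

namespace Matrix

variable {n R : Type*} [TopologicalSpace R]

theorem isClosed_setOf_isSymm [T2Space R] : IsClosed {M : Matrix n n R | M.IsSymm} :=
  isClosed_eq continuous_id.matrix_transpose continuous_id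

theorem isClosed_setOf_posSemidef [Fintype n] [Ring R] [PartialOrder R] [StarRing R]
    [IsTopologicalRing R] [ContinuousStar R] [OrderClosedTopology R] :
    IsClosed {M : Matrix n n R | M.PosSemidef} := by
  have hset : {M : Matrix n n R | M.PosSemidef} =
      {M | Mᴴ = M} ∩ ⋂ x : n → R, {M | 0 ≤ star x ⬝ᵥ (M *ᵥ x)} := by
    ext M
    simp only [Set.mem_inter_iff, Set.mem_iInter, posSemidef_iff_dotProduct_mulVec]
    rfl
  rw [hset]
  refine (isClosed_eq continuous_id.matrix_conjTranspose continuous_id).inter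
    (isClosed_iInter fun x => isClosed_le continuous_const ?_)
  fun_prop

end Matrix

open scoped Matrix.Norms.Elementwise

theorem helly_selection_covariance_general
    {d : ℕ} {Q : ℕ → ℝ → ℝ} {A : ℕ → ℝ → Matrix (Fin d) (Fin d) ℝ}
    {C ε : ℝ} (hε : 0 < ε) {εs : ℕ → ℝ} (hεs : Tendsto εs atTop (𝓝 0))
    (hQ0 : ∀ k, Q k 0 = 0)
    (hQmono : ∀ k s t, 0 ≤ s → s ≤ t → Q k s ≤ Q k t)
    (hQC : ∀ k, Q k 1 ≤ C)
    (hQinc : ∀ k s t, 0 ≤ s → s < t → t ≤ 1 → Q k t - Q k s ≤ 2 * ε * (t - s) + εs k)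
    (hA0 : ∀ k, A k 0 = 0)
    (hAsymm : ∀ k t, 0 ≤ t → (A k t).IsSymm)
    (hApsd : ∀ k s t, 0 ≤ s → s < t → (A k t - A k s).PosSemidef)
    (hA1 : ∀ k t, 1 ≤ t → A k t = A k 1)
    (hAQ : ∀ k i j s t, 0 ≤ s → s < t → |A k t i j - A k s i j| ≤ Q k t - Q k s) :
    ∃ σ : ℕ → ℕ, StrictMono σ ∧ ∃ B : ℝ → Matrix (Fin d) (Fin d) ℝ,
      ContinuousOn B (Set.Ici (0 : ℝ)) ∧ B 0 = 0 ∧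
      (∀ t, 0 ≤ t → (B t).IsSymm) ∧
      (∀ s t, 0 ≤ s → s < t → (B t - B s).PosSemidef) ∧
      (∀ t, 1 ≤ t → B t = B 1) ∧
      (∀ t, 0 ≤ t → Tendsto (fun k => A (σ k) t) atTop (𝓝 (B t))) := by
  have hA_dist : ∀ k s t, 0 ≤ s → s ≤ t → dist (A k s) (A k t) ≤ Q k t - Q k s := by
    intro k s t hs hst
    rcases hst.eq_or_lt with rfl | hst
    · simp
    rw [dist_comm, dist_eq_norm]
    exact (Matrix.norm_le_iff (sub_nonneg.2 (hQmono k s t hs hst.le))).2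
      fun i j => hAQ k i j s t hs hst
  have hA_bound : ∀ k (t : Set.Icc (0 : ℝ) 1), A k t ∈ Metric.closedBall 0 C := by
    rintro k ⟨t, ht0, ht1⟩
    rw [Metric.mem_closedBall, ← hA0 k, dist_comm]
    linarith [hA_dist k 0 t le_rfl ht0, hQ0 k, hQmono k t 1 ht0 ht1, hQC k]
  have hA_equi : AsymptoticallyUniformlyEquicontinuous fun k (t : Set.Icc (0 : ℝ) 1) => A k t :=
    .of_dist_le (by positivity) (by simpa using hεs.abs) fun k =>
      dist_le_mul_dist_add_abs_of_forall_lt (by positivity) fun s t hst =>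
        (hA_dist k s t s.2.1 hst.le).trans (hQinc k s t s.2.1 hst t.2.2)
  obtain ⟨φ, hφ, g, hg, hlim⟩ :=
    hA_equi.exists_strictMono_forall_tendsto (isCompact_closedBall 0 C) hA_bound
  set B := Set.IccExtend zero_le_one g
  have hA_proj : ∀ k t, 0 ≤ t → A k (Set.projIcc 0 1 zero_le_one t) = A k t := by
    intro k t ht
    rcases le_total t 1 with ht1 | ht1
    · rw [Set.projIcc_of_mem _ ⟨ht, ht1⟩]
    · rw [Set.projIcc_of_right_le _ ht1, hA1 k t ht1]
  have hconv : ∀ t, 0 ≤ t → Tendsto (fun k => A (φ k) t) atTop (𝓝 (B t)) := fun t ht =>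
    (hlim _).congr fun k => hA_proj (φ k) t ht
  refine ⟨φ, hφ, B, hg.continuous.Icc_extend'.continuousOn, ?_, fun t ht => ?_,
    fun s t hs hst => ?_, fun t ht => ?_, hconv⟩
  · exact tendsto_nhds_unique (hconv 0 le_rfl) (by simp only [hA0, tendsto_const_nhds])
  · exact Matrix.isClosed_setOf_isSymm.mem_of_tendsto (hconv t ht)
      (.of_forall fun k => hAsymm _ t ht)
  · exact Matrix.isClosed_setOf_posSemidef.mem_of_tendsto
      ((hconv t (hs.trans hst.le)).sub (hconv s hs)) (.of_forall fun k => hApsd _ s t hs hst)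
  · simp only [B, Set.IccExtend_of_right_le _ _ ht, Set.IccExtend_right]

/-- Helly-type selection (Lemma 1): a sequence `A^k` of matrix-valued "discrete covariance
functions", whose traces `Q^k` are uniformly bounded and asymptotically equi-continuous,
has a subsequence converging pointwise on `[0,∞)` to a covariance matrix function `A` with
`A(t) = A(1)` for `t ≥ 1`. -/
theorem helly_selection_covariance
    {d : ℕ} {Q : ℕ → ℝ → ℝ} {A : ℕ → ℝ → Matrix (Fin d) (Fin d) ℝ}
    {C ε : ℝ} (hε : 0 < ε) {εs : ℕ → ℝ} (hεs : Tendsto εs atTop (𝓝 0))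
    (hQ0 : ∀ k, Q k 0 = 0)
    (hQnonneg : ∀ k t, 0 ≤ t → 0 ≤ Q k t)
    (hQmono : ∀ k s t, 0 ≤ s → s ≤ t → Q k s ≤ Q k t)
    (hQ1 : ∀ k t, 1 ≤ t → Q k t = Q k 1)
    (hQC : ∀ k, Q k 1 ≤ C)
    (hQinc : ∀ k s t, 0 ≤ s → s < t → t ≤ 1 → Q k t - Q k s ≤ 2 * ε * (t - s) + εs k)
    (hA0 : ∀ k, A k 0 = 0)
    (hAsymm : ∀ k t, 0 ≤ t → (A k t).IsSymm)
    (hApsd : ∀ k s t, 0 ≤ s → s < t → (A k t - A k s).PosSemidef)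
    (hA1 : ∀ k t, 1 ≤ t → A k t = A k 1)
    (hAQ : ∀ k i j s t, 0 ≤ s → s < t → |A k t i j - A k s i j| ≤ Q k t - Q k s) :
    ∃ σ : ℕ → ℕ, StrictMono σ ∧ ∃ B : ℝ → Matrix (Fin d) (Fin d) ℝ,
      ContinuousOn B (Set.Ici (0 : ℝ)) ∧ B 0 = 0 ∧
      (∀ t, 0 ≤ t → (B t).IsSymm) ∧
      (∀ s t, 0 ≤ s → s < t → (B t - B s).PosSemidef) ∧
      (∀ t, 1 ≤ t → B t = B 1) ∧
      (∀ t, 0 ≤ t → Tendsto (fun k => A (σ k) t) atTop (𝓝 (B t))) :=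
  helly_selection_covariance_general hε hεs hQ0 hQmono hQC hQinc hA0 hAsymm hApsd hA1 hAQ
end

section
/- Suppose that for each k we are given partition points 0 = t_{k,m_k} < t_{k,m_k+1} < ⋯ < t_{k,n_k} = 1 with mesh max_p (t_{k,p} − t_{k,p−1}) → 0, probability measures μ_p on G with μ_p(U^c) = 0 and U-truncated means b_p such that b_p → e uniformly over p > m_k as k → ∞, and define A^k_{ij}(t) = ∑_{0 < t_{k,p} ≤ t} ∫_G [φ_i(x) − φ_i(b_p)][φ_j(x) − φ_j(b_p)] μ_p(dx). Assume A^k(t) → A(t) for all t ≥ 0 as k → ∞, where A is a covariance matrix function, and that the trace functions Q^k of A^k satisfy Q^k(t) − Q^k(s) ≤ 2ε(t − s) + ε_k with ε_k → 0. Let Y be a smooth manifold with compatible metric ρ, let y : [0,1] → Y be continuous, and for each k let y^k : [0,1] → Y be a step function constant on each [t_{k,p−1}, t_{k,p}) such that for every t > 0, ρ(y^k(t_{k,p}), y(t_{k,p})) → 0 uniformly over t_{k,p} ≤ t as k → ∞. Let F = {F_{ij}} be a bounded continuous matrix-valued function on Y × G. Then for every t > 0, ∑_{0 < t_{k,p}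 ≤ t} ∑_{i,j=1}^d ∫_G F_{ij}(y^k(t_{k,p−1}), b_p)[φ_i(x) − φ_i(b_p)][φ_j(x) − φ_j(b_p)] μ_p(dx) converges, as k → ∞, to ∑_{i,j=1}^d ∫_0^t F_{ij}(y(s), e) dA_{ij}(s), where dA_{ij} is the Lebesgue–Stieltjes integration against A_{ij}, expressed via the monotone functions A_{ii}, A_{jj}, and t ↦ A_{ii}(t) + A_{jj}(t) + 2A_{ij}(t) (each nondecreasing since A is a covariance matrix function). -/
open MeasureTheory ProbabilityTheory Filter Topology
open scoped Manifold Classical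

/-- Lebesgue–Stieltjes measure of a monotone continuous function (junk value `0` otherwise). -/
noncomputable def lsMeasure (f : ℝ → ℝ) : Measure ℝ :=
  if h : Monotone f ∧ Continuous f then
    StieltjesFunction.measure ⟨f, h.1, fun _ => h.2.continuousWithinAt⟩
  else 0

/-- `∫_{(0,t]} g dA_{ij}`, the Lebesgue–Stieltjes integral against the entry `A_{ij}` of a
covariance matrix function `A`, expressed through the nondecreasing functions `A_{ii}`,
`A_{jj}` and `A_{ii} + A_{jj} + 2 A_{ij}`. -/
noncomputable def stieltjesIntegralIJ {d : ℕ} (A : ℝ → Matrix (Fin d) (Fin d) ℝ)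
    (i j : Fin d) (g : ℝ → ℝ) (t : ℝ) : ℝ :=
  (1 / 2) *
    ((∫ s in Set.Ioc (0 : ℝ) t, g s ∂ lsMeasure fun u => A u i i + A u j j + 2 * A u i j) -
      (∫ s in Set.Ioc (0 : ℝ) t, g s ∂ lsMeasure fun u => A u i i) -
      ∫ s in Set.Ioc (0 : ℝ) t, g s ∂ lsMeasure fun u => A u j j)

/-- The entry `A^k_{ij}(τ) = ∑_{0 < t_{k,p} ≤ τ} ∫ (φ_i(x) − φ_i(b_p))(φ_j(x) − φ_j(b_p)) dμ_p`. -/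
noncomputable def Ak {d : ℕ} {G : Type*} [MeasurableSpace G]
    (φ : G → EuclideanSpace ℝ (Fin d)) (μ : ℕ → Measure G) (b : ℕ → G)
    (t : ℕ → ℝ) (mk nk : ℕ) (τ : ℝ) : Matrix (Fin d) (Fin d) ℝ :=
  Matrix.of fun i j => ∑ p ∈ Finset.Ioc mk nk,
    if t p ≤ τ then ∫ x, (φ x i - φ (b p) i) * (φ x j - φ (b p) j) ∂(μ p) else 0

/-!
By polarization, `A_{ij} = ½ ((A_{ii} + A_{jj} + 2 A_{ij}) − A_{ii} − A_{jj})`, and the same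
identity holds for the weights `w_p = (∫ (φ_i − φ_i(b_p)) (φ_j − φ_j(b_p)) dμ_p)_{ij}`. Since
these weight matrices and the increments of `A` are positive semidefinite, it suffices to treat
nonnegative weights `Δ_p` whose cumulative sums `∑_{t_p ≤ σ} Δ_p` converge to a continuous
nondecreasing `M`. They are the distribution functions of the discrete measures
`∑_p Δ_p δ_{t_p}`, which therefore converge to `dM` on every interval; comparing with step
functions on a fixed fine grid upgrades this to convergence of integrals of continuous functions.
The coefficients `F(y^k(t_{p−1}), b_p)` are uniformly close to `F(y(t_p), e)` (by compactness of
`y([0,1])`), except at the first partition point, where `y^k` is not controlled; but the weight of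
that point tends to `0` because `M` is continuous at `0` and `M(0) = 0`.
-/

open Set

section IntervalPartition

variable {ν : Measure ℝ} [IsLocallyFiniteMeasure ν]

lemma setIntegral_Ioc_eq_sum {g : ℝ → ℝ} {σ : ℕ → ℝ} (hσ : Monotone σ) {N : ℕ}
    (hg : ContinuousOn g (Icc (σ 0) (σ N))) :
    ∫ x in Ioc (σ 0) (σ N), g x ∂ν =
      ∑ q ∈ Finset.range N, ∫ x in Ioc (σ q) (σ (q + 1)), g x ∂ν := by
  have hcell : ∀ q < N, Icc (σ q) (σ (q + 1)) ⊆ Icc (σ 0) (σ N) := fun q hq =>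
    Icc_subset_Icc (hσ q.zero_le) (hσ hq)
  rw [← intervalIntegral.integral_of_le (hσ N.zero_le),
    ← intervalIntegral.sum_integral_adjacent_intervals fun q hq =>
      (hg.mono (hcell q hq)).intervalIntegrable_of_Icc (hσ q.le_succ)]
  exact Finset.sum_congr rfl fun q _ => intervalIntegral.integral_of_le (hσ q.le_succ)

lemma measureReal_Ioc_eq_sum {σ : ℕ → ℝ} (hσ : Monotone σ) (N : ℕ) :
    ν.real (Ioc (σ 0) (σ N)) = ∑ q ∈ Finset.range N, ν.real (Ioc (σ q) (σ (q + 1))) := by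
  simpa using setIntegral_Ioc_eq_sum (ν := ν) (g := fun _ => (1 : ℝ)) hσ continuousOn_const

lemma abs_setIntegral_Ioc_sub_sum_le {f : ℝ → ℝ} {σ : ℕ → ℝ} (hσ : Monotone σ) {N : ℕ}
    (hf : ContinuousOn f (Icc (σ 0) (σ N))) {θ : ℝ}
    (hosc : ∀ q < N, ∀ x ∈ Ioc (σ q) (σ (q + 1)), |f x - f (σ q)| ≤ θ) :
    |∫ x in Ioc (σ 0) (σ N), f x ∂ν -
        ∑ q ∈ Finset.range N, f (σ q) * ν.real (Ioc (σ q) (σ (q + 1)))| ≤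
      θ * ν.real (Ioc (σ 0) (σ N)) := by
  rw [setIntegral_Ioc_eq_sum hσ hf, measureReal_Ioc_eq_sum hσ, Finset.mul_sum,
    ← Finset.sum_sub_distrib]
  refine (Finset.abs_sum_le_sum_abs _ _).trans (Finset.sum_le_sum fun q hq => ?_)
  have hq := Finset.mem_range.1 hq
  have hint : IntegrableOn f (Ioc (σ q) (σ (q + 1))) ν :=
    ((hf.mono (Icc_subset_Icc (hσ q.zero_le) (hσ hq))).integrableOn_Icc).mono_set
      Ioc_subset_Icc_self
  rw [mul_comm, ← smul_eq_mul, ← setIntegral_const, ← integral_sub hint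
    (integrableOn_const measure_Ioc_lt_top.ne)]
  exact norm_setIntegral_le_of_norm_le_const (f := fun x => f x - f (σ q)) measure_Ioc_lt_top
    (hosc q hq)

end IntervalPartition

lemma ContinuousOn.exists_partition_abs_sub_le {f : ℝ → ℝ} {a b : ℝ} (hab : a ≤ b)
    (hf : ContinuousOn f (Icc a b)) {θ : ℝ} (hθ : 0 < θ) :
    ∃ (N : ℕ) (σ : ℕ → ℝ), Monotone σ ∧ σ 0 = a ∧ σ N = b ∧
      ∀ q < N, ∀ x ∈ Ioc (σ q) (σ (q + 1)), |f x - f (σ q)| ≤ θ := by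
  obtain ⟨δ, hδ, hunif⟩ := Metric.uniformContinuousOn_iff.1
    (isCompact_Icc.uniformContinuousOn_of_continuous hf) θ hθ
  obtain ⟨N, hN⟩ := exists_nat_gt ((b - a) / δ)
  have hNpos : (0 : ℝ) < N := (div_nonneg (sub_nonneg.2 hab) hδ.le).trans_lt hN
  set h := (b - a) / N with hdef
  have hh : 0 ≤ h := div_nonneg (sub_nonneg.2 hab) hNpos.le
  have hhδ : h < δ := by rwa [hdef, div_lt_iff₀ hNpos, mul_comm, ← div_lt_iff₀ hδ]
  have hNh : a + N * h = b := by rw [hdef]; field_simp; ring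
  refine ⟨N, fun q => a + q * h, fun p q hpq => ?_, by simp, hNh, fun q hq x ⟨hx₁, hx₂⟩ => ?_⟩
  · simp only
    gcongr
  · have hq : (q : ℝ) + 1 ≤ N := by exact_mod_cast hq
    have hq₀ : 0 ≤ (q : ℝ) * h := by positivity
    push_cast at hx₂
    refine (hunif x ⟨by linarith, by nlinarith⟩ _ ⟨by linarith, by nlinarith⟩ ?_).le
    rw [Real.dist_eq, abs_of_pos (by linarith)]
    linarith

lemma tendsto_setIntegral_Ioc_of_tendsto_measureReal_Ioc {ι : Type*} {l : Filter ι}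
    {ν : ι → Measure ℝ} [∀ k, IsLocallyFiniteMeasure (ν k)] {ρ : Measure ℝ}
    [IsLocallyFiniteMeasure ρ] {a b : ℝ} (hab : a ≤ b)
    (hν : ∀ c d, a ≤ c → c ≤ d → d ≤ b →
      Tendsto (fun k => (ν k).real (Ioc c d)) l (𝓝 (ρ.real (Ioc c d))))
    {f : ℝ → ℝ} (hf : ContinuousOn f (Icc a b)) :
    Tendsto (fun k => ∫ x in Ioc a b, f x ∂ν k) l (𝓝 (∫ x in Ioc a b, f x ∂ρ)) := by
  rw [Metric.tendsto_nhds]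
  intro ε hε
  set R := ρ.real (Ioc a b)
  have hR : 0 ≤ R := measureReal_nonneg
  set θ := ε / (2 * (2 * R + 1)) with hθdef
  have hθ : θ * (2 * R + 1) = ε / 2 := by rw [hθdef]; field_simp
  obtain ⟨N, σ, hσ, rfl, rfl, hosc⟩ := hf.exists_partition_abs_sub_le hab (by positivity : 0 < θ)
  have hsum := tendsto_finsetSum (Finset.range N) fun q hq =>
    (hν _ _ (hσ q.zero_le) (hσ q.le_succ) (hσ (Finset.mem_range.1 hq))).const_mul (f (σ q))
  filter_upwards [hsum (Metric.ball_mem_nhds _ (half_pos hε)),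
    (hν _ _ le_rfl hab le_rfl).eventually (gt_mem_nhds (lt_add_one R))] with k hk hνk
  simp only [Set.mem_preimage, Metric.mem_ball, Real.dist_eq, Nat.succ_eq_add_one] at hk
  rw [Real.dist_eq]
  have hνk' : θ * (ν k).real (Ioc (σ 0) (σ N)) ≤ θ * (R + 1) := by gcongr
  have hk_err := abs_setIntegral_Ioc_sub_sum_le (ν := ν k) hσ hf hosc
  have hρ_err := abs_setIntegral_Ioc_sub_sum_le (ν := ρ) hσ hf hosc
  set Ik := ∫ x in Ioc (σ 0) (σ N), f x ∂ν k
  set I := ∫ x in Ioc (σ 0) (σ N), f x ∂ρ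
  set Sk := ∑ q ∈ Finset.range N, f (σ q) * (ν k).real (Ioc (σ q) (σ (q + 1)))
  set S := ∑ q ∈ Finset.range N, f (σ q) * ρ.real (Ioc (σ q) (σ (q + 1)))
  have := abs_sub_le Ik Sk I
  have := abs_sub_le Sk S I
  have := abs_sub_comm I S
  linarith

section WeightedDirac

variable {α X : Type*} [MeasurableSpace X] [MeasurableSingletonClass X]

noncomputable def weightedDirac (s : Finset α) (x : α → X) (w : α → ℝ) : Measure X :=
  ∑ p ∈ s, ENNReal.ofReal (w p) • Measure.dirac (x p)

instance (s : Finset α) (x : α → X) (w : α → ℝ) : IsFiniteMeasure (weightedDirac s x w) := by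
  refine ⟨?_⟩
  simp [weightedDirac, ENNReal.sum_lt_top]

lemma setIntegral_weightedDirac {s : Finset α} {x : α → X} {w : α → ℝ} (hw : ∀ p ∈ s, 0 ≤ w p)
    (h : X → ℝ) {S : Set X} [DecidablePred (· ∈ S)] (hS : MeasurableSet S) :
    ∫ y in S, h y ∂weightedDirac s x w = ∑ p ∈ s, if x p ∈ S then h (x p) * w p else 0 := by
  rw [← integral_indicator hS, weightedDirac, integral_finsetSum_measure fun p _ =>
    (integrable_dirac (by simp)).smul_measure ENNReal.ofReal_ne_top]
  refine Finset.sum_congr rfl fun p hp => ?_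
  rw [integral_smul_measure, integral_dirac, ENNReal.toReal_ofReal (hw p hp), smul_eq_mul,
    Set.indicator_apply]
  split_ifs <;> ring

lemma measureReal_weightedDirac {s : Finset α} {x : α → X} {w : α → ℝ} (hw : ∀ p ∈ s, 0 ≤ w p)
    {S : Set X} [DecidablePred (· ∈ S)] (hS : MeasurableSet S) :
    (weightedDirac s x w).real S = ∑ p ∈ s, if x p ∈ S then w p else 0 := by
  simpa using setIntegral_weightedDirac hw (fun _ => (1 : ℝ)) hS

end WeightedDirac

instance (M : ℝ → ℝ) : IsLocallyFiniteMeasure (lsMeasure M) := by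
  unfold lsMeasure; split_ifs <;> infer_instance

lemma lsMeasure_real_Ioc {M : ℝ → ℝ} (hMm : Monotone M) (hMc : Continuous M) {a b : ℝ}
    (hab : a ≤ b) : (lsMeasure M).real (Ioc a b) = M b - M a := by
  rw [measureReal_def, lsMeasure, dif_pos ⟨hMm, hMc⟩, StieltjesFunction.measure_Ioc,
    ENNReal.toReal_ofReal (sub_nonneg.2 (hMm hab))]

lemma setIntegral_lsMeasure_Ioc_of_eq {M : ℝ → ℝ} (hMm : Monotone M) (hMc : Continuous M)
    {a b c : ℝ} (hab : a ≤ b) (hbc : b ≤ c) (hM : M b = M c) (g : ℝ → ℝ) :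
    ∫ x in Ioc a c, g x ∂lsMeasure M = ∫ x in Ioc a b, g x ∂lsMeasure M := by
  refine setIntegral_congr_set ?_
  rw [← Ioc_union_Ioc_eq_Ioc hab hbc]
  refine union_ae_eq_left_of_ae_eq_empty (ae_eq_empty.2 ?_)
  rw [← measureReal_eq_zero_iff measure_Ioc_lt_top.ne, lsMeasure_real_Ioc hMm hMc hbc, hM,
    sub_self]

lemma sum_ite_mem_Ioc {α : Type*} (s : Finset α) (x w : α → ℝ) {c d : ℝ} (hcd : c ≤ d) :
    ∑ p ∈ s, (if x p ∈ Ioc c d then w p else 0) =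
      (∑ p ∈ s, if x p ≤ d then w p else 0) - ∑ p ∈ s, if x p ≤ c then w p else 0 := by
  rw [← Finset.sum_sub_distrib]
  refine Finset.sum_congr rfl fun p _ => ?_
  by_cases hc : x p ≤ c
  · simp [hc, hc.trans hcd]
  · by_cases hd : x p ≤ d <;> simp [hc, hd, not_le.1 hc]

lemma Matrix.PosSemidef.diag_add_diag_add_two_mul_nonneg {ι : Type*} [Fintype ι] [DecidableEq ι]
    {P : Matrix ι ι ℝ} (hP : P.PosSemidef) (i j : ι) : 0 ≤ P i i + P j j + 2 * P i j := by
  have h := hP.dotProduct_mulVec_nonneg (Pi.single i 1 + Pi.single j 1)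
  have hsymm : P j i = P i j := hP.isHermitian.apply i j
  simp only [star_trivial, mulVec_add, mulVec_single, MulOpposite.op_one, one_smul,
    dotProduct_add, add_dotProduct, single_dotProduct, col_apply, one_mul] at h
  linarith

section MonotoneEntries

variable {ι α : Type*} [Preorder α] {A : α → Matrix ι ι ℝ}

lemma monotone_diag_of_posSemidef_sub (hA : ∀ s τ, s ≤ τ → (A τ - A s).PosSemidef) (i : ι) :
    Monotone fun u => A u i i := fun s τ h =>
  sub_nonneg.1 ((hA s τ h).diag_nonneg (i := i))

lemma monotone_polarization_of_posSemidef_sub [Fintype ι] [DecidableEq ι]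
    (hA : ∀ s τ, s ≤ τ → (A τ - A s).PosSemidef) (i j : ι) :
    Monotone fun u => A u i i + A u j j + 2 * A u i j := fun s τ h => by
  have := (hA s τ h).diag_add_diag_add_two_mul_nonneg i j
  simp only [Matrix.sub_apply] at this
  linarith

end MonotoneEntries

lemma IsCompact.exists_pos_eventually_abs_sub_lt {Y Z : Type*} [PseudoMetricSpace Y]
    [TopologicalSpace Z] {K : Set Y} (hK : IsCompact K) {g : Y → Z → ℝ}
    (hg : Continuous fun q : Y × Z => g q.1 q.2) (z₀ : Z) {δ : ℝ} (hδ : 0 < δ) :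
    ∃ r > 0, ∀ᶠ z in 𝓝 z₀, ∀ u ∈ K, ∀ v, dist v u < r → |g v z - g u z₀| < δ := by
  have htube : ∀ᶠ x : ℝ × Z in 𝓝 (0, z₀), ∀ u ∈ K, ∀ v, dist v u < x.1 →
      |g v x.2 - g u z₀| < δ := by
    refine hK.eventually_forall_of_forall_eventually fun u _ => ?_
    have hcont : {q : Y × Z | |g q.1 q.2 - g u z₀| < δ / 2} ∈ 𝓝 (u, z₀) :=
      (hg.continuousAt (x := (u, z₀))).preimage_mem_nhds (Metric.ball_mem_nhds _ (half_pos hδ))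
    rw [nhds_prod_eq] at hcont
    obtain ⟨P, hP, Q, hQ, hPQ⟩ := mem_prod_iff.1 hcont
    obtain ⟨ρ, hρ, hball⟩ := Metric.mem_nhds_iff.1 hP
    have hnear : ∀ v, dist v u < ρ → ∀ z ∈ Q, |g v z - g u z₀| < δ / 2 := fun v hv z hz =>
      hPQ (Set.mk_mem_prod (hball (Metric.mem_ball.2 hv)) hz)
    have hsmall : ∀ᶠ r : ℝ in 𝓝 0, r < ρ / 2 := eventually_lt_nhds (half_pos hρ)
    filter_upwards [(hsmall.prod_nhds hQ).prod_nhds (Metric.ball_mem_nhds u (half_pos hρ))]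
      with x hx v hv
    obtain ⟨⟨hx1, hx2⟩, hx3⟩ := hx
    have hx3 := Metric.mem_ball.1 hx3
    have h1 := hnear v (by linarith [dist_triangle v x.2 u]) x.1.2 hx2
    have h2 := hnear x.2 (by linarith) z₀ (mem_of_mem_nhds hQ)
    rw [abs_sub_comm] at h2
    linarith [abs_sub_le (g v x.1.2) (g u z₀) (g x.2 z₀)]
  rw [nhds_prod_eq] at htube
  obtain ⟨r, hr, hr0⟩ := (htube.curry.filter_mono nhdsWithin_le_nhds |>.and
    self_mem_nhdsWithin).exists (f := 𝓝[>] (0 : ℝ))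
  exact ⟨r, hr0, hr⟩

lemma memLp_of_continuousOn_of_measure_compl_eq_zero {Ω E : Type*} [TopologicalSpace Ω]
    [MeasurableSpace Ω] [OpensMeasurableSpace Ω] [NormedAddCommGroup E]
    [SecondCountableTopologyEither Ω E] {μ : Measure Ω}
    [IsFiniteMeasure μ] {K : Set Ω} (hK : IsCompact K) (hKc : IsClosed K) {g : Ω → E}
    (hg : ContinuousOn g K) (hμK : μ Kᶜ = 0) (p : ENNReal) : MemLp g p μ := by
  have hae : ∀ᵐ x ∂μ, x ∈ K := measure_eq_zero_iff_ae_notMem.1 hμK |>.mono fun _ h => not_not.1 h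
  obtain ⟨C, hC⟩ := hK.exists_bound_of_continuousOn hg
  have hmeas := hg.aestronglyMeasurable (μ := μ) hKc.measurableSet
  rw [Measure.restrict_eq_self_of_ae_mem hae] at hmeas
  exact MemLp.of_bound hmeas C (hae.mono hC)

lemma posSemidef_of_integral_mul {Ω ι : Type*} [MeasurableSpace Ω] [Fintype ι] {μ : Measure Ω}
    {X : ι → Ω → ℝ} (hX : ∀ i, MemLp (X i) 2 μ) :
    (Matrix.of fun i j => ∫ ω, X i ω * X j ω ∂μ).PosSemidef := by
  refine Matrix.PosSemidef.of_dotProduct_mulVec_nonneg ?_ fun v => ?_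
  · ext i j
    simp [mul_comm]
  · have hint : ∀ i j, Integrable (fun ω => v i * X i ω * (v j * X j ω)) μ := fun i j =>
      (((hX i).integrable_mul (hX j)).const_mul (v i * v j)).congr
        (.of_forall fun ω => by simp only [Pi.mul_apply]; ring)
    calc (0 : ℝ) ≤ ∫ ω, (∑ i, v i * X i ω) * (∑ j, v j * X j ω) ∂μ :=
          integral_nonneg fun ω => mul_self_nonneg _
      _ = ∑ i, ∑ j, v i * ((∫ ω, X i ω * X j ω ∂μ) * v j) := by
        simp_rw [Finset.sum_mul_sum]
        rw [integral_finsetSum _ fun i _ => integrable_finsetSum _ fun j _ => hint i j]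
        refine Finset.sum_congr rfl fun i _ => ?_
        rw [integral_finsetSum _ fun j _ => hint i j]
        refine Finset.sum_congr rfl fun j _ => ?_
        rw [← integral_mul_const, ← integral_const_mul]
        congr 1 with ω
        ring
      _ = star v ⬝ᵥ (Matrix.of fun i j => ∫ ω, X i ω * X j ω ∂μ).mulVec v := by
        simp [dotProduct, Matrix.mulVec, Finset.mul_sum]

lemma abs_sum_ite_mul_le {a b : ℕ} (hab : a < b) {x w e : ℕ → ℝ} (hw : ∀ p, 0 ≤ w p)
    {τ θ C : ℝ} (hθ : 0 ≤ θ) (he_first : |e (a + 1)| ≤ C)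
    (he : ∀ p, a + 1 < p → p ≤ b → x p ≤ τ → |e p| ≤ θ) :
    |∑ p ∈ Finset.Ioc a b, if x p ≤ τ then e p * w p else 0| ≤
      C * w (a + 1) + θ * ∑ p ∈ Finset.Ioc a b, if x p ≤ τ then w p else 0 := by
  have hmem : a + 1 ∈ Finset.Ioc a b := Finset.mem_Ioc.2 ⟨Nat.lt_succ_self _, hab⟩
  have hite_nonneg : ∀ p, 0 ≤ if x p ≤ τ then w p else 0 := fun p => by
    split_ifs <;> [exact hw p; exact le_rfl]
  have hfirst : |if x (a + 1) ≤ τ then e (a + 1) * w (a + 1) else 0| ≤ C * w (a + 1) := by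
    split_ifs
    · rw [abs_mul, abs_of_nonneg (hw _)]
      exact mul_le_mul_of_nonneg_right he_first (hw _)
    · simpa using mul_nonneg ((abs_nonneg _).trans he_first) (hw _)
  have hrest : ∀ p ∈ (Finset.Ioc a b).erase (a + 1),
      |if x p ≤ τ then e p * w p else 0| ≤ θ * if x p ≤ τ then w p else 0 := by
    intro p hp
    obtain ⟨hne, hp⟩ := Finset.mem_erase.1 hp
    obtain ⟨hp1, hp2⟩ := Finset.mem_Ioc.1 hp
    split_ifs with hpτ
    · rw [abs_mul, abs_of_nonneg (hw _)]
      exact mul_le_mul_of_nonneg_right (he p (by omega) hp2 hpτ) (hw _)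
    · simp
  rw [← Finset.add_sum_erase _ _ hmem]
  refine (abs_add_le _ _).trans (add_le_add hfirst ?_)
  refine (Finset.abs_sum_le_sum_abs _ _).trans ((Finset.sum_le_sum hrest).trans ?_)
  rw [← Finset.mul_sum]
  exact mul_le_mul_of_nonneg_left
    (Finset.sum_le_sum_of_subset_of_nonneg (Finset.erase_subset _ _) fun p _ _ => hite_nonneg p) hθ

structure VanishingMeshPartitions (m n : ℕ → ℕ) (t : ℕ → ℕ → ℝ) : Prop where
  m_lt_n : ∀ k, m k < n k
  t_first : ∀ k, t k (m k) = 0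
  t_last : ∀ k, t k (n k) = 1
  t_lt : ∀ k p q, m k ≤ p → p < q → q ≤ n k → t k p < t k q
  mesh : ∀ δ : ℝ, 0 < δ → ∃ K, ∀ k ≥ K, ∀ p, m k < p → p ≤ n k → t k p - t k (p - 1) < δ

namespace VanishingMeshPartitions

variable {m n : ℕ → ℕ} {t : ℕ → ℕ → ℝ} {k p : ℕ} {Δ : ℕ → ℕ → ℝ} {M : ℝ → ℝ}

lemma t_le (hP : VanishingMeshPartitions m n t) {q : ℕ} (hp : m k ≤ p) (hpq : p ≤ q)
    (hq : q ≤ n k) : t k p ≤ t k q := by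
  rcases hpq.eq_or_lt with rfl | hpq
  · rfl
  · exact (hP.t_lt k p q hp hpq hq).le

lemma t_mem_Icc (hP : VanishingMeshPartitions m n t) (hp : m k ≤ p) (hq : p ≤ n k) :
    t k p ∈ Icc 0 1 :=
  ⟨hP.t_first k ▸ hP.t_le le_rfl hp hq, hP.t_last k ▸ hP.t_le hp hq le_rfl⟩

lemma t_pos (hP : VanishingMeshPartitions m n t) (hp : m k < p) (hq : p ≤ n k) : 0 < t k p :=
  hP.t_first k ▸ hP.t_lt k _ _ le_rfl hp hq

lemma t_le_min_one_iff (hP : VanishingMeshPartitions m n t) {τ : ℝ} (hp : m k ≤ p)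
    (hq : p ≤ n k) : t k p ≤ min τ 1 ↔ t k p ≤ τ := by
  simp [(hP.t_mem_Icc hp hq).2]

lemma eventually_t_first_succ_le (hP : VanishingMeshPartitions m n t) {η : ℝ} (hη : 0 < η) :
    ∀ᶠ k in atTop, t k (m k + 1) ≤ η := by
  obtain ⟨K, hK⟩ := hP.mesh η hη
  filter_upwards [eventually_ge_atTop K] with k hk
  have := hK k hk (m k + 1) (Nat.lt_succ_self _) (hP.m_lt_n k)
  rw [Nat.add_sub_cancel, hP.t_first k, sub_zero] at this
  exact this.le

lemma eventually_abs_sub_prev_lt (hP : VanishingMeshPartitions m n t) {f : ℝ → ℝ}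
    (hf : ContinuousOn f (Icc 0 1)) {θ : ℝ} (hθ : 0 < θ) :
    ∀ᶠ k in atTop, ∀ p, m k < p → p ≤ n k → |f (t k p) - f (t k (p - 1))| < θ := by
  obtain ⟨δ, hδ, hunif⟩ := Metric.uniformContinuousOn_iff.1
    (isCompact_Icc.uniformContinuousOn_of_continuous hf) θ hθ
  obtain ⟨K, hK⟩ := hP.mesh δ hδ
  filter_upwards [eventually_ge_atTop K] with k hk p hp hq
  have hprev : m k ≤ p - 1 := Nat.le_sub_one_of_lt hp
  have hle := hP.t_le hprev (Nat.sub_le p 1) hq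
  refine hunif _ (hP.t_mem_Icc hp.le hq) _ (hP.t_mem_Icc hprev (by omega)) ?_
  rw [Real.dist_eq, abs_of_nonneg (sub_nonneg.2 hle)]
  exact hK k hk p hp hq

lemma sum_ite_le_zero (hP : VanishingMeshPartitions m n t) (Δ : ℕ → ℕ → ℝ) (k : ℕ) :
    ∑ p ∈ Finset.Ioc (m k) (n k), (if t k p ≤ 0 then Δ k p else 0) = 0 :=
  Finset.sum_eq_zero fun _ hp =>
    if_neg (not_le.2 (hP.t_pos (Finset.mem_Ioc.1 hp).1 (Finset.mem_Ioc.1 hp).2))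

lemma tendsto_weight_first_succ (hP : VanishingMeshPartitions m n t) (hΔ : ∀ k p, 0 ≤ Δ k p)
    (hM : ContinuousAt M 0)
    (hS : ∀ σ, 0 ≤ σ → Tendsto (fun k => ∑ p ∈ Finset.Ioc (m k) (n k),
      if t k p ≤ σ then Δ k p else 0) atTop (𝓝 (M σ))) :
    Tendsto (fun k => Δ k (m k + 1)) atTop (𝓝 0) := by
  have hM0 : M 0 = 0 := tendsto_nhds_unique ((hS 0 le_rfl).congr (hP.sum_ite_le_zero Δ))
    tendsto_const_nhds
  refine tendsto_order.2 ⟨fun a ha => .of_forall fun k => ha.trans_le (hΔ _ _), fun ε hε => ?_⟩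
  obtain ⟨η, hMη, hη⟩ := (((hM.eventually (gt_mem_nhds (hM0 ▸ hε))).filter_mono
    nhdsWithin_le_nhds).and self_mem_nhdsWithin).exists (f := 𝓝[>] (0 : ℝ))
  filter_upwards [(hS η (le_of_lt hη)).eventually (gt_mem_nhds hMη),
    hP.eventually_t_first_succ_le hη] with k hk hfirst
  calc Δ k (m k + 1) = if t k (m k + 1) ≤ η then Δ k (m k + 1) else 0 := (if_pos hfirst).symm
    _ ≤ ∑ p ∈ Finset.Ioc (m k) (n k), if t k p ≤ η then Δ k p else 0 :=
      Finset.single_le_sum (f := fun p => if t k p ≤ η then Δ k p else 0)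
        (fun p _ => by split_ifs <;> [exact hΔ k p; exact le_rfl])
        (Finset.mem_Ioc.2 ⟨Nat.lt_succ_self _, hP.m_lt_n k⟩)
    _ < ε := hk

lemma tendsto_sum_ite_sub_mul (hP : VanishingMeshPartitions m n t) (hΔ : ∀ k p, 0 ≤ Δ k p)
    (hM : ContinuousAt M 0)
    (hS : ∀ σ, 0 ≤ σ → Tendsto (fun k => ∑ p ∈ Finset.Ioc (m k) (n k),
      if t k p ≤ σ then Δ k p else 0) atTop (𝓝 (M σ)))
    {τ : ℝ} (hτ : 0 ≤ τ) {f : ℝ → ℝ} (hf : ContinuousOn f (Icc 0 1))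
    {fk : ℕ → ℕ → ℝ} {C : ℝ} (hfkC : ∀ k p, |fk k p| ≤ C)
    (hfk : ∀ δ, 0 < δ → ∃ K, ∀ k ≥ K, ∀ p, m k + 1 < p → p ≤ n k → t k p ≤ τ →
      |fk k p - f (t k (p - 1))| < δ) :
    Tendsto (fun k => ∑ p ∈ Finset.Ioc (m k) (n k),
      if t k p ≤ τ then (fk k p - f (t k p)) * Δ k p else 0) atTop (𝓝 0) := by
  obtain ⟨Cf, hCf⟩ := isCompact_Icc.exists_bound_of_continuousOn hf
  rw [Metric.tendsto_nhds]
  intro ε hε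
  set B := |M τ| + 1
  have hB : 0 < B := by positivity
  set θ := ε / (2 * B) with hθdef
  have hθ : 0 < θ := by positivity
  have hθB : θ * B = ε / 2 := by rw [hθdef]; field_simp
  obtain ⟨K, hK⟩ := hfk (θ / 2) (half_pos hθ)
  have hfirst := (hP.tendsto_weight_first_succ hΔ hM hS).const_mul (C + Cf)
  rw [mul_zero] at hfirst
  filter_upwards [eventually_ge_atTop K, hP.eventually_abs_sub_prev_lt hf (half_pos hθ),
    (hS τ hτ).eventually (gt_mem_nhds (lt_of_le_of_lt (le_abs_self _) (lt_add_one _))),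
    hfirst.eventually (gt_mem_nhds (half_pos hε))] with k hkK hprev hSk hfirstk
  have hbound := abs_sum_ite_mul_le (hP.m_lt_n k) (hΔ k) hθ.le
    ((abs_sub _ _).trans (add_le_add (hfkC _ _)
      (hCf _ (hP.t_mem_Icc (Nat.le_succ _) (hP.m_lt_n k)))))
    fun p hp1 hp2 hpτ => by
      have h1 := hK k hkK p hp1 hp2 hpτ
      have h2 := hprev p (by omega) hp2
      have h3 := abs_sub_le (fk k p) (f (t k (p - 1))) (f (t k p))
      rw [abs_sub_comm (f _) (f (t k p))] at h3
      linarith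
  rw [dist_zero_right, Real.norm_eq_abs]
  have : θ * ∑ p ∈ Finset.Ioc (m k) (n k), (if t k p ≤ τ then Δ k p else 0) ≤ θ * B := by
    gcongr
  linarith

lemma tendsto_riemannStieltjesSum (hP : VanishingMeshPartitions m n t)
    (hΔ : ∀ k p, 0 ≤ Δ k p) (hMm : Monotone M) (hMc : Continuous M)
    (hS : ∀ σ, 0 ≤ σ → Tendsto (fun k => ∑ p ∈ Finset.Ioc (m k) (n k),
      if t k p ≤ σ then Δ k p else 0) atTop (𝓝 (M σ)))
    {τ : ℝ} (hτ : 0 < τ) {f : ℝ → ℝ} (hf : ContinuousOn f (Icc 0 1))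
    {fk : ℕ → ℕ → ℝ} {C : ℝ} (hfkC : ∀ k p, |fk k p| ≤ C)
    (hfk : ∀ δ, 0 < δ → ∃ K, ∀ k ≥ K, ∀ p, m k + 1 < p → p ≤ n k → t k p ≤ τ →
      |fk k p - f (t k (p - 1))| < δ) :
    Tendsto (fun k => ∑ p ∈ Finset.Ioc (m k) (n k), if t k p ≤ τ then fk k p * Δ k p else 0)
      atTop (𝓝 (∫ s in Ioc 0 τ, f s ∂lsMeasure M)) := by
  -- `f` is only controlled on `[0, 1]`; beyond `1` there are no partition points and `M` is flat.
  set τ' := min τ 1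
  have hτ' : 0 < τ' := lt_min hτ one_pos
  have hle_iff : ∀ k, ∀ p ∈ Finset.Ioc (m k) (n k), t k p ≤ τ' ↔ t k p ≤ τ := fun k p hp =>
    hP.t_le_min_one_iff (Finset.mem_Ioc.1 hp).1.le (Finset.mem_Ioc.1 hp).2
  have hMτ' : M τ' = M τ := tendsto_nhds_unique (hS τ' hτ'.le) ((hS τ hτ.le).congr fun k =>
    Finset.sum_congr rfl fun p hp => by simp only [hle_iff k p hp])
  let ν k := weightedDirac (Finset.Ioc (m k) (n k)) (t k) (Δ k)
  have hν : ∀ c d, 0 ≤ c → c ≤ d → d ≤ τ' →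
      Tendsto (fun k => (ν k).real (Ioc c d)) atTop (𝓝 ((lsMeasure M).real (Ioc c d))) := by
    intro c d hc hcd _
    rw [lsMeasure_real_Ioc hMm hMc hcd]
    refine ((hS d (hc.trans hcd)).sub (hS c hc)).congr fun k => ?_
    rw [measureReal_weightedDirac (fun p _ => hΔ _ p) measurableSet_Ioc]
    exact (sum_ite_mem_Ioc _ (t k) (Δ k) hcd).symm
  have hRS := tendsto_setIntegral_Ioc_of_tendsto_measureReal_Ioc hτ'.le hν
    (hf.mono (Icc_subset_Icc le_rfl (min_le_right _ _)))
  have herr := hP.tendsto_sum_ite_sub_mul hΔ hMc.continuousAt hS hτ'.le hf hfkC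
    fun δ hδ => (hfk δ hδ).imp fun K hK k hk p hp1 hp2 hpτ =>
      hK k hk p hp1 hp2 (hpτ.trans (min_le_left _ _))
  rw [setIntegral_lsMeasure_Ioc_of_eq hMm hMc hτ'.le (min_le_left _ _) hMτ',
    ← zero_add (∫ x in Ioc 0 τ', f x ∂lsMeasure M)]
  refine (herr.add hRS).congr fun k => ?_
  simp only [ν, setIntegral_weightedDirac (fun p _ => hΔ _ p) _ measurableSet_Ioc,
    ← Finset.sum_add_distrib]
  refine Finset.sum_congr rfl fun p hp => ?_
  have hpos := hP.t_pos (Finset.mem_Ioc.1 hp).1 (Finset.mem_Ioc.1 hp).2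
  simp only [mem_Ioc, hpos, true_and, hle_iff k p hp]
  split_ifs <;> ring

lemma tendsto_riemannStieltjesSum_entry (hP : VanishingMeshPartitions m n t) {d : ℕ}
    {w : ℕ → ℕ → Matrix (Fin d) (Fin d) ℝ} (hw : ∀ k p, (w k p).PosSemidef)
    {A : ℝ → Matrix (Fin d) (Fin d) ℝ} (hAc : Continuous A)
    (hA : ∀ s τ, s ≤ τ → (A τ - A s).PosSemidef)
    (hS : ∀ σ, 0 ≤ σ → ∀ i j, Tendsto (fun k => ∑ p ∈ Finset.Ioc (m k) (n k),
      if t k p ≤ σ then w k p i j else 0) atTop (𝓝 (A σ i j)))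
    {τ : ℝ} (hτ : 0 < τ) {f : ℝ → ℝ} (hf : ContinuousOn f (Icc 0 1))
    {fk : ℕ → ℕ → ℝ} {C : ℝ} (hfkC : ∀ k p, |fk k p| ≤ C)
    (hfk : ∀ δ, 0 < δ → ∃ K, ∀ k ≥ K, ∀ p, m k + 1 < p → p ≤ n k → t k p ≤ τ →
      |fk k p - f (t k (p - 1))| < δ) (i j : Fin d) :
    Tendsto (fun k => ∑ p ∈ Finset.Ioc (m k) (n k), if t k p ≤ τ then fk k p * w k p i j else 0)
      atTop (𝓝 (stieltjesIntegralIJ A i j f τ)) := by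
  have hdiag (l : Fin d) := hP.tendsto_riemannStieltjesSum (fun k p => (hw k p).diag_nonneg)
    (monotone_diag_of_posSemidef_sub hA l) (hAc.matrix_elem l l) (fun σ hσ => hS σ hσ l l)
    hτ hf hfkC hfk
  have hpolar := hP.tendsto_riemannStieltjesSum
    (fun k p => (hw k p).diag_add_diag_add_two_mul_nonneg i j)
    (monotone_polarization_of_posSemidef_sub hA i j)
    (((hAc.matrix_elem i i).add (hAc.matrix_elem j j)).add
      (continuous_const.mul (hAc.matrix_elem i j)))
    (fun σ hσ => (((hS σ hσ i i).add (hS σ hσ j j)).add ((hS σ hσ i j).const_mul 2)).congr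
      fun k => by
        simp only [Finset.mul_sum, ← Finset.sum_add_distrib]
        exact Finset.sum_congr rfl fun p _ => by split_ifs <;> ring)
    hτ hf hfkC hfk
  refine (((hpolar.sub (hdiag i)).sub (hdiag j)).const_mul (1 / 2)).congr fun k => ?_
  simp only [Finset.mul_sum, ← Finset.sum_sub_distrib]
  exact Finset.sum_congr rfl fun p _ => by split_ifs <;> ring

lemma exists_abs_sub_lt_of_tendsto (hP : VanishingMeshPartitions m n t) {Y Z : Type*}
    [PseudoMetricSpace Y] [TopologicalSpace Z]
    {g : Y → Z → ℝ} (hg : Continuous fun q : Y × Z => g q.1 q.2) {z₀ : Z} {b : ℕ → Z}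
    (hb : ∀ V ∈ 𝓝 z₀, ∃ K, ∀ k ≥ K, ∀ p, m k < p → b p ∈ V)
    {y : ℝ → Y} (hy : ContinuousOn y (Icc 0 1)) {yk : ℕ → ℝ → Y} {τ : ℝ}
    (hyk : ∀ δ : ℝ, 0 < δ → ∃ K, ∀ k ≥ K, ∀ p, m k < p → p ≤ n k →
      t k p ≤ τ → dist (yk k (t k p)) (y (t k p)) < δ) (δ : ℝ) (hδ : 0 < δ) :
    ∃ K, ∀ k ≥ K, ∀ p, m k + 1 < p → p ≤ n k → t k p ≤ τ →
      |g (yk k (t k (p - 1))) (b p) - g (y (t k (p - 1))) z₀| < δ := by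
  obtain ⟨r, hr, hV⟩ := (isCompact_Icc.image_of_continuousOn hy).exists_pos_eventually_abs_sub_lt
    hg z₀ hδ
  obtain ⟨K₁, hK₁⟩ := hb _ hV
  obtain ⟨K₂, hK₂⟩ := hyk r hr
  refine ⟨max K₁ K₂, fun k hk p hp hpn hpτ => ?_⟩
  have hprev : m k < p - 1 := by omega
  exact hK₁ k (le_of_max_le_left hk) p (by omega) _ ⟨_, hP.t_mem_Icc hprev.le (by omega), rfl⟩ _
    (hK₂ k (le_of_max_le_right hk) (p - 1) hprev (by omega)
      ((hP.t_le hprev.le (Nat.sub_le p 1) hpn).trans hpτ))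

end VanishingMeshPartitions

lemma ite_sum_sum {ι κ : Type*} [Fintype ι] [Fintype κ] (c : Prop) [Decidable c]
    (g : ι → κ → ℝ) : (if c then ∑ i, ∑ j, g i j else 0) = ∑ i, ∑ j, if c then g i j else 0 := by
  split_ifs <;> simp

theorem riemann_stieltjes_sums_converge_general
    {d : ℕ} {G : Type*} [Group G] [TopologicalSpace G]
    [ChartedSpace (EuclideanSpace ℝ (Fin d)) G]
    [MeasurableSpace G] [BorelSpace G]
    -- the chart data
    {U : Set G} (hUcpt : IsCompact (closure U))
    {φ : G → EuclideanSpace ℝ (Fin d)} {W : Set G} (hUW : closure U ⊆ W)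
    (hφ : ContMDiffOn (𝓡 d) 𝓘(ℝ, EuclideanSpace ℝ (Fin d)) (⊤ : ℕ∞) φ W)
    -- the partitions `0 = t_{k,m_k} < t_{k,m_k+1} < ⋯ < t_{k,n_k} = 1` with mesh → 0
    {m n : ℕ → ℕ} (hmn : ∀ k, m k < n k)
    {t : ℕ → ℕ → ℝ} (ht0 : ∀ k, t k (m k) = 0) (ht1 : ∀ k, t k (n k) = 1)
    (htmono : ∀ k p q, m k ≤ p → p < q → q ≤ n k → t k p < t k q)
    (hmesh : ∀ δ : ℝ, 0 < δ → ∃ K, ∀ k ≥ K, ∀ p, m k < p → p ≤ n k →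
      t k p - t k (p - 1) < δ)
    -- the probability measures `μ_p` supported in `U` with truncated means `b_p → e`
    {μ : ℕ → Measure G} (hμprob : ∀ p, IsProbabilityMeasure (μ p))
    (hμU : ∀ p, μ p Uᶜ = 0)
    {b : ℕ → G}
    (hbe : ∀ V ∈ 𝓝 (1 : G), ∃ K, ∀ k ≥ K, ∀ p, m k < p → b p ∈ V)
    -- the limiting covariance matrix function `A` (extended by `0` to `t ≤ 0`)
    {A : ℝ → Matrix (Fin d) (Fin d) ℝ} (hAcont : Continuous A)
    (hApsd : ∀ s τ : ℝ, s ≤ τ → (A τ - A s).PosSemidef)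
    (hAconv : ∀ τ : ℝ, 0 ≤ τ →
      Tendsto (fun k => Ak φ μ b (t k) (m k) (n k) τ) atTop (𝓝 (A τ)))
    -- the smooth manifold `Y` with compatible metric, the paths `y^k` and `y`
    {Y : Type*} [MetricSpace Y]
    {y : ℝ → Y} (hy : ContinuousOn y (Set.Icc 0 1))
    {yk : ℕ → ℝ → Y}
    (hyconv : ∀ τ : ℝ, 0 < τ → ∀ δ : ℝ, 0 < δ → ∃ K, ∀ k ≥ K, ∀ p, m k < p → p ≤ n k →
      t k p ≤ τ → dist (yk k (t k p)) (y (t k p)) < δ)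
    -- the bounded continuous matrix-valued function `F` on `Y × G`
    {F : Y → G → Matrix (Fin d) (Fin d) ℝ}
    (hFcont : Continuous fun q : Y × G => F q.1 q.2)
    (hFbdd : ∃ Cf : ℝ, ∀ u g i j, |F u g i j| ≤ Cf) :
    ∀ τ : ℝ, 0 < τ →
      Tendsto (fun k => ∑ p ∈ Finset.Ioc (m k) (n k), if t k p ≤ τ then
          ∑ i, ∑ j, ∫ x, F (yk k (t k (p - 1))) (b p) i j *
            ((φ x i - φ (b p) i) * (φ x j - φ (b p) j)) ∂(μ p) else 0)
        atTop
        (𝓝 (∑ i, ∑ j, stieltjesIntegralIJ A i j (fun s => F (y s) 1 i j) τ)) := by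
  intro τ hτ
  have hP : VanishingMeshPartitions m n t := ⟨hmn, ht0, ht1, htmono, hmesh⟩
  obtain ⟨C, hC⟩ := hFbdd
  have hμK (p : ℕ) : μ p (closure U)ᶜ = 0 :=
    measure_mono_null (compl_subset_compl.2 subset_closure) (hμU p)
  have hw (p : ℕ) :
      (Matrix.of fun i j => ∫ x, (φ x i - φ (b p) i) * (φ x j - φ (b p) j) ∂μ p).PosSemidef :=
    have := hμprob p
    posSemidef_of_integral_mul fun i =>
      (memLp_of_continuousOn_of_measure_compl_eq_zero hUcpt isClosed_closure
        ((EuclideanSpace.proj (𝕜 := ℝ) i).continuous.comp_continuousOn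
          (hφ.continuousOn.mono hUW)) (hμK p) 2).sub (memLp_const _)
  have hentry (i j : Fin d) := hP.tendsto_riemannStieltjesSum_entry (fun _ p => hw p) hAcont
    hApsd (fun σ hσ i j => tendsto_pi_nhds.1 (tendsto_pi_nhds.1 (hAconv σ hσ) i) j) hτ
    (f := fun s => F (y s) 1 i j)
    ((hFcont.matrix_elem i j).comp_continuousOn (hy.prodMk continuousOn_const))
    (fk := fun k p => F (yk k (t k (p - 1))) (b p) i j) (fun k p => hC _ _ i j)
    (hP.exists_abs_sub_lt_of_tendsto (g := fun u z => F u z i j) (hFcont.matrix_elem i j) hbe hy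
      (hyconv τ hτ)) i j
  refine (tendsto_finsetSum _ fun i _ => tendsto_finsetSum _ fun j _ => hentry i j).congr
    fun k => ?_
  simp only [Matrix.of_apply, ← integral_const_mul, ite_sum_sum]
  rw [Finset.sum_comm (s := Finset.Ioc (m k) (n k))]
  exact Finset.sum_congr rfl fun i _ => Finset.sum_comm

/-- Lemma 2: convergence of Riemann–Stieltjes type sums
`∑_{0<t_{k,p}≤t} ∑_{i,j} ∫ F_{ij}(y^k(t_{k,p−1}), b_p)(φ_i(x)−φ_i(b_p))(φ_j(x)−φ_j(b_p)) dμ_p`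
to `∑_{i,j} ∫_0^t F_{ij}(y(s), e) dA_{ij}(s)`. -/
theorem riemann_stieltjes_sums_converge
    {d : ℕ} {G : Type*} [Group G] [TopologicalSpace G] [IsTopologicalGroup G]
    [ChartedSpace (EuclideanSpace ℝ (Fin d)) G] [LieGroup (𝓡 d) (⊤ : ℕ∞) G]
    [MeasurableSpace G] [BorelSpace G]
    -- the chart data
    {U : Set G} (hU : U ∈ 𝓝 (1 : G)) (hUcpt : IsCompact (closure U))
    {φ : G → EuclideanSpace ℝ (Fin d)} {W : Set G} (hW : IsOpen W) (hUW : closure U ⊆ W)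
    (hφ : ContMDiffOn (𝓡 d) 𝓘(ℝ, EuclideanSpace ℝ (Fin d)) (⊤ : ℕ∞) φ W)
    {ψ : EuclideanSpace ℝ (Fin d) → G}
    (hψ : ContMDiffOn 𝓘(ℝ, EuclideanSpace ℝ (Fin d)) (𝓡 d) (⊤ : ℕ∞) ψ (φ '' U))
    (hψφ : ∀ g ∈ U, ψ (φ g) = g) (hφψ : ∀ v ∈ φ '' U, φ (ψ v) = v)
    (hconv : Convex ℝ (φ '' U)) (hnhds : φ '' U ∈ 𝓝 (0 : EuclideanSpace ℝ (Fin d)))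
    (hφ1 : φ 1 = 0)
    -- the partitions `0 = t_{k,m_k} < t_{k,m_k+1} < ⋯ < t_{k,n_k} = 1` with mesh → 0
    {m n : ℕ → ℕ} (hmn : ∀ k, m k < n k)
    {t : ℕ → ℕ → ℝ} (ht0 : ∀ k, t k (m k) = 0) (ht1 : ∀ k, t k (n k) = 1)
    (htmono : ∀ k p q, m k ≤ p → p < q → q ≤ n k → t k p < t k q)
    (hmesh : ∀ δ : ℝ, 0 < δ → ∃ K, ∀ k ≥ K, ∀ p, m k < p → p ≤ n k →
      t k p - t k (p - 1) < δ)
    -- the probability measures `μ_p` supported in `U` with truncated means `b_p → e`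
    {μ : ℕ → Measure G} (hμprob : ∀ p, IsProbabilityMeasure (μ p))
    (hμU : ∀ p, μ p Uᶜ = 0)
    {b : ℕ → G} (hbU : ∀ p, b p ∈ U) (hbmean : ∀ p, φ (b p) = ∫ x, φ x ∂(μ p))
    (hbe : ∀ V ∈ 𝓝 (1 : G), ∃ K, ∀ k ≥ K, ∀ p, m k < p → b p ∈ V)
    -- the limiting covariance matrix function `A` (extended by `0` to `t ≤ 0`)
    {A : ℝ → Matrix (Fin d) (Fin d) ℝ} (hAcont : Continuous A)
    (hA0 : ∀ τ : ℝ, τ ≤ 0 → A τ = 0) (hAsymm : ∀ τ, (A τ).IsSymm)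
    (hApsd : ∀ s τ : ℝ, s ≤ τ → (A τ - A s).PosSemidef)
    (hAconv : ∀ τ : ℝ, 0 ≤ τ →
      Tendsto (fun k => Ak φ μ b (t k) (m k) (n k) τ) atTop (𝓝 (A τ)))
    -- equicontinuity of the traces `Q^k`
    {ε : ℝ} (hε : 0 < ε) {εs : ℕ → ℝ} (hεs : Tendsto εs atTop (𝓝 0))
    (hQinc : ∀ k (s τ : ℝ), 0 ≤ s → s < τ → τ ≤ 1 →
      (∑ i, Ak φ μ b (t k) (m k) (n k) τ i i) - (∑ i, Ak φ μ b (t k) (m k) (n k) s i i) ≤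
        2 * ε * (τ - s) + εs k)
    -- the smooth manifold `Y` with compatible metric, the paths `y^k` and `y`
    {E' : Type*} [NormedAddCommGroup E'] [NormedSpace ℝ E']
    {H' : Type*} [TopologicalSpace H'] {I' : ModelWithCorners ℝ E' H'}
    {Y : Type*} [MetricSpace Y] [ChartedSpace H' Y] [IsManifold I' (⊤ : ℕ∞) Y]
    {y : ℝ → Y} (hy : ContinuousOn y (Set.Icc 0 1))
    {yk : ℕ → ℝ → Y}
    (hstep : ∀ k p, m k < p → p ≤ n k →
      ∀ s ∈ Set.Ico (t k (p - 1)) (t k p), yk k s = yk k (t k (p - 1)))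
    (hyconv : ∀ τ : ℝ, 0 < τ → ∀ δ : ℝ, 0 < δ → ∃ K, ∀ k ≥ K, ∀ p, m k < p → p ≤ n k →
      t k p ≤ τ → dist (yk k (t k p)) (y (t k p)) < δ)
    -- the bounded continuous matrix-valued function `F` on `Y × G`
    {F : Y → G → Matrix (Fin d) (Fin d) ℝ}
    (hFcont : Continuous fun q : Y × G => F q.1 q.2)
    (hFbdd : ∃ Cf : ℝ, ∀ u g i j, |F u g i j| ≤ Cf) :
    ∀ τ : ℝ, 0 < τ →
      Tendsto (fun k => ∑ p ∈ Finset.Ioc (m k) (n k), if t k p ≤ τ then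
          ∑ i, ∑ j, ∫ x, F (yk k (t k (p - 1))) (b p) i j *
            ((φ x i - φ (b p) i) * (φ x j - φ (b p) j)) ∂(μ p) else 0)
        atTop
        (𝓝 (∑ i, ∑ j, stieltjesIntegralIJ A i j (fun s => F (y s) 1 i j) τ)) :=
  riemann_stieltjes_sums_converge_general hUcpt hUW hφ hmn ht0 ht1 htmono hmesh hμprob hμU hbe
    hAcont hApsd hAconv hy hyconv hFcont hFbdd
end
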